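/- Let L : ℝ^d → ℝ^𝒴 be a polyhedral loss that embeds a discrete loss ℓ : ℛ → ℝ^𝒴. Then there exists a link function ψ : ℝ^d → ℛ such that for every p ∈ Δ_𝒴 there exists δ > 0 such that for all u ∈ ℝ^d: ⟨p, L(u)⟩ − inf_{u'∈ℝ^d} ⟨p, L(u')⟩ ≥ δ · (⟨p, ℓ(ψ(u))⟩ − min_{r∈ℛ} ⟨p, ℓ(r)⟩). -/

import Mathlib

/-- The probability simplex over a finite outcome set `Y`. -/
def probSimplex (Y : Type*) [Fintype Y] : Set (Y → ℝ) :=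
  {p | (∀ y, 0 ≤ p y) ∧ ∑ y, p y = 1}

/-- Expected loss `⟨p, v⟩ = ∑ y, p y * v y`. -/
def elloss {Y : Type*} [Fintype Y] (p : Y → ℝ) (v : Y → ℝ) : ℝ :=
  ∑ y, p y * v y

/-- `u` minimizes the expected loss `⟨p, L ·⟩` over the report set. -/
def Minimizes {U Y : Type*} [Fintype Y] (p : Y → ℝ) (L : U → Y → ℝ) (u : U) : Prop :=
  ∀ u' : U, elloss p (L u) ≤ elloss p (L u')

/-- The Bayes risk `inf_u ⟨p, L u⟩`. -/
noncomputable def bayesRisk {U Y : Type*} [Fintype Y] (p : Y → ℝ) (L : U → Y → ℝ) : ℝ :=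
  sInf (Set.range fun u => elloss p (L u))

/-- `L` embeds the discrete loss `ℓ`. -/
def Embeds {R Y : Type*} [Fintype Y] {d : ℕ}
    (L : (Fin d → ℝ) → Y → ℝ) (ℓ : R → Y → ℝ) : Prop :=
  ∃ φ : R → (Fin d → ℝ), Function.Injective φ ∧ (∀ r, L (φ r) = ℓ r) ∧
    ∀ p ∈ probSimplex Y, ∀ r, Minimizes p ℓ r ↔ Minimizes p L (φ r)

/-- A polyhedral convex function: a pointwise maximum of finitely many affine functions. -/
def IsPolyhedralFn {d : ℕ} (g : (Fin d → ℝ) → ℝ) : Prop :=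
  ∃ (m : ℕ) (a : Fin (m + 1) → Fin d → ℝ) (b : Fin (m + 1) → ℝ),
    ∀ x, g x = Finset.univ.sup' Finset.univ_nonempty (fun i => ∑ j, a i j * x j + b i)

/-!
The optimal sets `Γ p = {u | Minimizes p L u}` are projections of faces of the epigraph
polyhedron of `L`, so there are finitely many of them, and each is a polyhedron
`{u | A u ≤ β}`. Fourier–Motzkin elimination gives two facts about such a polyhedron: if every
relaxation `{A u ≤ β + c w}` (`c > 0`) is nonempty then so is the polyhedron, and points of small
relaxations are uniformly close to it (a qualitative Hoffman bound). The first yields `ε > 0`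
such that whenever some of the finitely many `Γ q` all come `ε`-close to `u`, they share a point;
averaging those `q` and using the embedding, some `φ r` lies in all of them, and `ψ u := r`.
The second turns small surrogate regret at `p` into `ε`-closeness to `Γ p`, which forces
`ψ u` to be optimal for `ℓ`; otherwise the surrogate regret exceeds a fixed `c > 0` while the
`ℓ`-regret is bounded.
-/

open Finset Filter Topology

section LinearSystem

variable {J : Type*} {d : ℕ}

def polyhedron (A : J → Fin d → ℝ) (β : J → ℝ) : Set (Fin d → ℝ) :=
  {x | ∀ j, A j ⬝ᵥ x ≤ β j}

lemma polyhedron_mono {A : J → Fin d → ℝ} {β β' : J → ℝ} (h : β ≤ β') :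
    polyhedron A β ⊆ polyhedron A β' :=
  fun _ hx j => (hx j).trans (h j)

lemma abs_dotProduct_sub_le (a x y : Fin d → ℝ) :
    |a ⬝ᵥ x - a ⬝ᵥ y| ≤ (∑ i, |a i|) * dist x y := by
  rw [← dotProduct_sub, dotProduct, sum_mul]
  refine (abs_sum_le_sum_abs _ _).trans (sum_le_sum fun i _ => ?_)
  rw [Pi.sub_apply, abs_mul, ← Real.dist_eq]
  exact mul_le_mul_of_nonneg_left (dist_le_pi_dist x y i) (abs_nonneg _)

lemma mem_polyhedron_add_smul_of_dist_le {A : J → Fin d → ℝ} {β : J → ℝ} {u v : Fin d → ℝ}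
    {c : ℝ} (hv : v ∈ polyhedron A β) (huv : dist u v ≤ c) :
    u ∈ polyhedron A (β + c • fun j => ∑ i, |A j i|) := by
  intro j
  have h := (le_abs_self _).trans (abs_dotProduct_sub_le (A j) u v)
  have hsum : 0 ≤ ∑ i, |A j i| := sum_nonneg fun i _ => abs_nonneg _
  simp only [Pi.add_apply, Pi.smul_apply, smul_eq_mul]
  nlinarith [hv j, mul_le_mul_of_nonneg_left huv hsum]

lemma dotProduct_eq_init_add_last (a x : Fin (d + 1) → ℝ) :
    a ⬝ᵥ x = Fin.init a ⬝ᵥ Fin.init x + a (Fin.last d) * x (Fin.last d) :=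
  Fin.sum_univ_castSucc _

lemma exists_clamp (Lo Hi : Finset ℝ) (h : ∀ a ∈ Lo, ∀ b ∈ Hi, a ≤ b) (ξ : ℝ) :
    ∃ t, (∀ a ∈ Lo, a ≤ t) ∧ (∀ b ∈ Hi, t ≤ b) ∧ (ξ < t → t ∈ Lo) ∧ (t < ξ → t ∈ Hi) := by
  by_cases hlo : ∃ a ∈ Lo, ξ < a
  · obtain ⟨a, ha, hξa⟩ := hlo
    refine ⟨Lo.max' ⟨a, ha⟩, fun a' ha' => Lo.le_max' a' ha',
      fun b hb => Lo.max'_le _ _ fun a' ha' => h a' ha' b hb, fun _ => Lo.max'_mem _,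
      fun hlt => absurd (hξa.trans_le (Lo.le_max' a ha)) hlt.not_gt⟩
  by_cases hhi : ∃ b ∈ Hi, b < ξ
  · obtain ⟨b, hb, hbξ⟩ := hhi
    push Not at hlo
    refine ⟨Hi.min' ⟨b, hb⟩, fun a ha => Hi.le_min' _ _ fun b' hb' => h a ha b' hb',
      fun b' hb' => Hi.min'_le b' hb', fun hlt => ?_, fun _ => Hi.min'_mem _⟩
    exact absurd ((Hi.min'_le b hb).trans_lt hbξ) hlt.not_gt
  push Not at hlo hhi
  exact ⟨ξ, hlo, hhi, fun h => (lt_irrefl _ h).elim, fun h => (lt_irrefl _ h).elim⟩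

namespace FourierMotzkin

variable (A : J → Fin (d + 1) → ℝ)

/-- Rows of the system obtained by eliminating the last variable: the rows not involving it, and
for each pair of rows where it has opposite signs, the positive combination cancelling it. -/
abbrev Index : Type _ :=
  {j // A j (Fin.last d) = 0} ⊕ {j // 0 < A j (Fin.last d)} × {k // A k (Fin.last d) < 0}

def combine {M : Type*} [AddCommGroup M] [Module ℝ M] (v : J → M) : Index A → M :=
  Sum.elim (fun j => v j) fun jk => A jk.1 (Fin.last d) • v jk.2 - A jk.2 (Fin.last d) • v jk.1

lemma combine_add_smul (β w : J → ℝ) (c : ℝ) :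
    combine A (β + c • w) = combine A β + c • combine A w := by
  funext i
  rcases i with j | jk
  · rfl
  · simp only [combine, Pi.add_apply, Pi.smul_apply, Sum.elim_inr, smul_eq_mul]
    ring

lemma combine_nonneg {w : J → ℝ} (hw : 0 ≤ w) : 0 ≤ combine A w := by
  rintro (j | ⟨⟨j, hj⟩, ⟨k, hk⟩⟩)
  · exact hw j
  · have hwj : 0 ≤ w j := hw j
    have hwk : 0 ≤ w k := hw k
    show 0 ≤ A j (Fin.last d) * w k - A k (Fin.last d) * w j
    nlinarith

/-- The value of the last variable at which row `j` becomes tight. -/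
noncomputable def bound (β : J → ℝ) (j : J) (y : Fin d → ℝ) : ℝ :=
  (β j - Fin.init (A j) ⬝ᵥ y) / A j (Fin.last d)

variable {A}

lemma dotProduct_le_iff_le_bound {β : J → ℝ} {j : J} (hj : 0 < A j (Fin.last d))
    (x : Fin (d + 1) → ℝ) : A j ⬝ᵥ x ≤ β j ↔ x (Fin.last d) ≤ bound A β j (Fin.init x) := by
  rw [bound, le_div_iff₀ hj, dotProduct_eq_init_add_last]
  constructor <;> intro h <;> linarith

lemma dotProduct_le_iff_bound_le {β : J → ℝ} {j : J} (hj : A j (Fin.last d) < 0)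
    (x : Fin (d + 1) → ℝ) : A j ⬝ᵥ x ≤ β j ↔ bound A β j (Fin.init x) ≤ x (Fin.last d) := by
  rw [bound, div_le_iff_of_neg hj, dotProduct_eq_init_add_last]
  constructor <;> intro h <;> linarith

lemma init_mem {β : J → ℝ} {x : Fin (d + 1) → ℝ} (hx : x ∈ polyhedron A β) :
    Fin.init x ∈ polyhedron (combine A fun j => Fin.init (A j)) (combine A β) := by
  rintro (⟨j, hj⟩ | ⟨⟨j, hj⟩, ⟨k, hk⟩⟩)
  · have := hx j
    rw [dotProduct_eq_init_add_last, hj, zero_mul, add_zero] at this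
    exact this
  · have hxj := hx j
    have hxk := hx k
    rw [dotProduct_eq_init_add_last] at hxj hxk
    simp only [combine, Sum.elim_inr, sub_dotProduct, smul_dotProduct, smul_eq_mul]
    nlinarith [mul_le_mul_of_nonneg_left hxk hj.le,
      mul_le_mul_of_nonneg_left hxj (neg_nonneg.2 hk.le)]

lemma bound_le_bound {β : J → ℝ} {y : Fin d → ℝ}
    (hy : y ∈ polyhedron (combine A fun j => Fin.init (A j)) (combine A β)) {j k : J}
    (hk : A k (Fin.last d) < 0) (hj : 0 < A j (Fin.last d)) : bound A β k y ≤ bound A β j y := by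
  have h := hy (Sum.inr (⟨j, hj⟩, ⟨k, hk⟩))
  simp only [combine, Sum.elim_inr, sub_dotProduct, smul_dotProduct, smul_eq_mul] at h
  have ek : bound A β k y * A k (Fin.last d) = β k - Fin.init (A k) ⬝ᵥ y :=
    div_mul_cancel₀ _ hk.ne
  have ej : bound A β j y * A j (Fin.last d) = β j - Fin.init (A j) ⬝ᵥ y :=
    div_mul_cancel₀ _ hj.ne'
  nlinarith [mul_neg_of_pos_of_neg hj hk]

lemma exists_snoc_mem [Fintype J] {β : J → ℝ} {y : Fin d → ℝ}
    (hy : y ∈ polyhedron (combine A fun j => Fin.init (A j)) (combine A β)) (ξ : ℝ) :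
    ∃ t, Fin.snoc y t ∈ polyhedron A β ∧
      (ξ < t → ∃ k, A k (Fin.last d) < 0 ∧ t = bound A β k y) ∧
      (t < ξ → ∃ j, 0 < A j (Fin.last d) ∧ t = bound A β j y) := by
  classical
  obtain ⟨t, hlo, hhi, hξt, htξ⟩ := exists_clamp
    ((univ.filter fun k => A k (Fin.last d) < 0).image (bound A β · y))
    ((univ.filter fun j => 0 < A j (Fin.last d)).image (bound A β · y))
    (by simp only [mem_image, mem_filter, mem_univ, true_and]
        rintro _ ⟨k, hk, rfl⟩ _ ⟨j, hj, rfl⟩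
        exact bound_le_bound hy hk hj) ξ
  simp only [mem_image, mem_filter, mem_univ, true_and, forall_exists_index, and_imp,
    forall_apply_eq_imp_iff₂] at hlo hhi hξt htξ
  refine ⟨t, fun j => ?_, fun h => ?_, fun h => ?_⟩
  · rcases lt_trichotomy (A j (Fin.last d)) 0 with hj | hj | hj
    · simpa [dotProduct_le_iff_bound_le hj] using hlo j hj
    · have := hy (Sum.inl ⟨j, hj⟩)
      simpa [dotProduct_eq_init_add_last, hj, combine] using this
    · simpa [dotProduct_le_iff_le_bound hj] using hhi j hj
  · obtain ⟨k, hk, hkt⟩ := hξt h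
    exact ⟨k, hk, hkt.symm⟩
  · obtain ⟨j, hj, hjt⟩ := htξ h
    exact ⟨j, hj, hjt.symm⟩

lemma bound_add_smul (β w : J → ℝ) (c : ℝ) (j : J) (y : Fin d → ℝ) :
    bound A (β + c • w) j y = bound A β j y + c * (w j / A j (Fin.last d)) := by
  simp only [bound, Pi.add_apply, Pi.smul_apply, smul_eq_mul]
  ring

lemma abs_bound_sub_bound_le (β : J → ℝ) (j : J) (y z : Fin d → ℝ) :
    |bound A β j y - bound A β j z|
      ≤ (∑ i, |Fin.init (A j) i|) / |A j (Fin.last d)| * dist y z := by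
  have h : bound A β j y - bound A β j z
      = (Fin.init (A j) ⬝ᵥ z - Fin.init (A j) ⬝ᵥ y) / A j (Fin.last d) := by
    simp only [bound]
    ring
  rw [h, abs_div, div_mul_eq_mul_div, dist_comm]
  exact div_le_div_of_nonneg_right (abs_dotProduct_sub_le _ _ _) (abs_nonneg _)

lemma abs_last_sub_le [Fintype J] {β w : J → ℝ} {c : ℝ} (hc : 0 ≤ c) {x : Fin (d + 1) → ℝ}
    (hx : x ∈ polyhedron A (β + c • w)) {y : Fin d → ℝ} {t : ℝ}
    (hlo : x (Fin.last d) < t → ∃ k, A k (Fin.last d) < 0 ∧ t = bound A β k y)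
    (hhi : t < x (Fin.last d) → ∃ j, 0 < A j (Fin.last d) ∧ t = bound A β j y) :
    |x (Fin.last d) - t| ≤ ∑ j, |bound A β j (Fin.init x) - bound A β j y|
      + c * ∑ j, |w j / A j (Fin.last d)| := by
  have hr : ∀ j, |bound A β j (Fin.init x) - bound A β j y| + c * |w j / A j (Fin.last d)|
      ≤ ∑ j, |bound A β j (Fin.init x) - bound A β j y| + c * ∑ j, |w j / A j (Fin.last d)| := by
    intro j
    rw [mul_sum, ← sum_add_distrib]
    exact single_le_sum (f := fun j => |bound A β j (Fin.init x) - bound A β j y|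
      + c * |w j / A j (Fin.last d)|)
      (fun j _ => add_nonneg (abs_nonneg _) (mul_nonneg hc (abs_nonneg _))) (mem_univ j)
  have hslack : ∀ j, |c * (w j / A j (Fin.last d))| = c * |w j / A j (Fin.last d)| := fun j => by
    rw [abs_mul, abs_of_nonneg hc]
  rcases lt_trichotomy (x (Fin.last d)) t with h | h | h
  · obtain ⟨k, hk, rfl⟩ := hlo h
    have hxk := (dotProduct_le_iff_bound_le hk x).1 (hx k)
    rw [bound_add_smul] at hxk
    rw [abs_sub_comm, abs_of_pos (sub_pos.2 h)]
    linarith [le_abs_self (bound A β k y - bound A β k (Fin.init x)),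
      abs_sub_comm (bound A β k y) (bound A β k (Fin.init x)),
      neg_abs_le (c * (w k / A k (Fin.last d))), hslack k, hr k]
  · rw [h, sub_self, abs_zero]
    exact add_nonneg (sum_nonneg fun j _ => abs_nonneg _)
      (mul_nonneg hc (sum_nonneg fun j _ => abs_nonneg _))
  · obtain ⟨j, hj, rfl⟩ := hhi h
    have hxj := (dotProduct_le_iff_le_bound hj x).1 (hx j)
    rw [bound_add_smul] at hxj
    rw [abs_of_pos (sub_pos.2 h)]
    linarith [le_abs_self (bound A β j (Fin.init x) - bound A β j y),
      le_abs_self (c * (w j / A j (Fin.last d))), hslack j, hr j]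

end FourierMotzkin

open FourierMotzkin in
theorem nonempty_polyhedron_of_forall_pos [Fintype J] {A : J → Fin d → ℝ} {β : J → ℝ}
    (w : J → ℝ) (h : ∀ c : ℝ, 0 < c → (polyhedron A (β + c • w)).Nonempty) :
    (polyhedron A β).Nonempty := by
  induction d generalizing J with
  | zero =>
    refine ⟨0, fun j => ?_⟩
    have hlim : Tendsto (fun c => β j + c * w j) (𝓝[>] 0) (𝓝 (β j)) :=
      ((continuous_const.add (continuous_id.mul continuous_const)).tendsto' 0 (β j)
        (by simp)).mono_left nhdsWithin_le_nhds
    refine (dotProduct_zero (A j)).trans_le (ge_of_tendsto hlim ?_)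
    filter_upwards [self_mem_nhdsWithin] with c hc
    obtain ⟨x, hx⟩ := h c hc
    simpa [dotProduct] using hx j
  | succ d ih =>
    obtain ⟨y, hy⟩ := ih (combine A w) fun c hc => by
      obtain ⟨x, hx⟩ := h c hc
      exact ⟨Fin.init x, combine_add_smul A β w c ▸ init_mem hx⟩
    obtain ⟨t, ht, -⟩ := exists_snoc_mem hy 0
    exact ⟨_, ht⟩

open FourierMotzkin in
/-- A qualitative Hoffman bound: points of small relaxations are uniformly close to the
polyhedron. -/
theorem exists_pos_forall_dist_le [Fintype J] {A : J → Fin d → ℝ} {β w : J → ℝ} (hw : 0 ≤ w)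
    (hne : (polyhedron A β).Nonempty) {ε : ℝ} (hε : 0 < ε) :
    ∃ c : ℝ, 0 < c ∧ ∀ x ∈ polyhedron A (β + c • w), ∃ y ∈ polyhedron A β, dist x y ≤ ε := by
  induction d generalizing J ε with
  | zero =>
    obtain ⟨y, hy⟩ := hne
    exact ⟨1, one_pos, fun x _ => ⟨y, hy, by rw [Subsingleton.elim x y, dist_self]; exact hε.le⟩⟩
  | succ d ih =>
    obtain ⟨x₀, hx₀⟩ := hne
    set K := ∑ j, (∑ i, |Fin.init (A j) i|) / |A j (Fin.last d)|
    set W := ∑ j, |w j / A j (Fin.last d)|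
    obtain ⟨ε₁, hε₁, hKε₁⟩ := exists_pos_mul_lt (half_pos hε) K
    obtain ⟨c₁, hc₁, hWc₁⟩ := exists_pos_mul_lt (half_pos hε) W
    obtain ⟨c', hc', hc'y⟩ := ih (combine_nonneg A hw) ⟨_, init_mem hx₀⟩ (lt_min hε hε₁)
    refine ⟨min c' c₁, lt_min hc' hc₁, fun x hx => ?_⟩
    have hx' : Fin.init x ∈ polyhedron _ (combine A β + c' • combine A w) :=
      polyhedron_mono (add_le_add le_rfl (smul_le_smul_of_nonneg_right (min_le_left _ _)
        (combine_nonneg A hw))) (combine_add_smul A β w _ ▸ init_mem hx)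
    obtain ⟨y, hy, hxy⟩ := hc'y _ hx'
    obtain ⟨t, ht, hlo, hhi⟩ := exists_snoc_mem hy (x (Fin.last d))
    refine ⟨_, ht, (dist_pi_le_iff hε.le).2 fun i => Fin.lastCases ?_ (fun i => ?_) i⟩
    · have hK : K * dist (Fin.init x) y ≤ ε / 2 :=
        (mul_le_mul_of_nonneg_left (hxy.trans (min_le_right _ _)) (by positivity)).trans hKε₁.le
      have hW : min c' c₁ * W ≤ ε / 2 := by
        rw [mul_comm]
        exact (mul_le_mul_of_nonneg_left (min_le_right _ _) (by positivity)).trans hWc₁.le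
      have hbound : ∑ j, |bound A β j (Fin.init x) - bound A β j y| ≤ K * dist (Fin.init x) y := by
        rw [sum_mul]
        exact sum_le_sum fun j _ => abs_bound_sub_bound_le β j _ _
      rw [Fin.snoc_last, Real.dist_eq]
      linarith [abs_last_sub_le (lt_min hc' hc₁).le hx hlo hhi]
    · rw [Fin.snoc_castSucc]
      exact (dist_le_pi_dist (Fin.init x) y i).trans (hxy.trans (min_le_left _ _))

theorem eventually_nonempty_iInter_of_forall_dist_le {κ : Type*} [Fintype κ] {J : κ → Type*}
    [∀ k, Fintype (J k)] (A : ∀ k, J k → Fin d → ℝ) (β : ∀ k, J k → ℝ) :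
    ∀ᶠ η in 𝓝[>] (0 : ℝ), ∀ u, (∀ k, ∃ v ∈ polyhedron (A k) (β k), dist u v ≤ η) →
      (⋂ k, polyhedron (A k) (β k)).Nonempty := by
  by_cases hne : (⋂ k, polyhedron (A k) (β k)).Nonempty
  · exact Eventually.of_forall fun _ _ _ => hne
  obtain ⟨η, hη, hfar⟩ : ∃ η : ℝ, 0 < η ∧
      ∀ u, ¬ ∀ k, ∃ v ∈ polyhedron (A k) (β k), dist u v ≤ η := by
    by_contra! hnear
    obtain ⟨x, hx⟩ := nonempty_polyhedron_of_forall_pos (A := fun kj : Σ k, J k => A kj.1 kj.2)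
        (β := fun kj => β kj.1 kj.2) (fun kj => ∑ i, |A kj.1 kj.2 i|) fun c hc => by
      obtain ⟨u, hu⟩ := hnear c hc
      refine ⟨u, fun ⟨k, j⟩ => ?_⟩
      obtain ⟨v, hv, huv⟩ := hu k
      exact mem_polyhedron_add_smul_of_dist_le hv huv j
    exact hne ⟨x, Set.mem_iInter.2 fun k j => hx ⟨k, j⟩⟩
  filter_upwards [Ioc_mem_nhdsGT hη] with η' hη' u hu
  exact (hfar u fun k => (hu k).imp fun v hv => ⟨hv.1, hv.2.trans hη'.2⟩).elim

end LinearSystem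

section Face

variable {E ι : Type*} [AddCommGroup E] [Module ℝ E] (g : ι → E →ᵃ[ℝ] ℝ)

def affinePolyhedron : Set E := {x | ∀ j, g j x ≤ 0}

lemma convex_affinePolyhedron : Convex ℝ (affinePolyhedron g) := by
  have h : affinePolyhedron g = ⋂ j, g j ⁻¹' Set.Iic 0 := by
    ext
    simp [affinePolyhedron]
  exact h ▸ convex_iInter fun j => (convex_Iic 0).affine_preimage (g j)

lemma exists_forall_lt_zero_of_convex [Finite ι] {F : Set E} (hF : Convex ℝ F) (hne : F.Nonempty)
    (hFP : F ⊆ affinePolyhedron g) : ∃ x ∈ F, ∀ j, (∃ z ∈ F, g j z < 0) → g j x < 0 := by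
  classical
  cases nonempty_fintype ι
  suffices h : ∀ s : Finset ι, ∃ x ∈ F, ∀ j ∈ s, (∃ z ∈ F, g j z < 0) → g j x < 0 by
    obtain ⟨x, hx, hxs⟩ := h univ
    exact ⟨x, hx, fun j => hxs j (mem_univ j)⟩
  intro s
  induction s using Finset.induction_on with
  | empty =>
    obtain ⟨x, hx⟩ := hne
    exact ⟨x, hx, by simp⟩
  | insert j s _ ih =>
    obtain ⟨x, hx, hxs⟩ := ih
    by_cases hj : ∃ z ∈ F, g j z < 0
    · obtain ⟨z, hz, hgz⟩ := hj
      refine ⟨(1 / 2 : ℝ) • x + (1 / 2 : ℝ) • z,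
        hF hx hz (by norm_num) (by norm_num) (by norm_num), fun i hi hi' => ?_⟩
      rw [Convex.combo_affine_apply (by norm_num), smul_eq_mul, smul_eq_mul]
      rcases mem_insert.1 hi with rfl | hi
      · linarith [hFP hx i]
      · linarith [hxs i hi hi', hFP hz i]
    · refine ⟨x, hx, fun i hi hi' => ?_⟩
      rcases mem_insert.1 hi with rfl | hi
      · exact (hj hi').elim
      · exact hxs i hi hi'

lemma isMinOn_of_forall_eq_zero [Finite ι] {f : E →ᵃ[ℝ] ℝ} {x z : E}
    (hx : IsMinOn f (affinePolyhedron g) x) (hxP : x ∈ affinePolyhedron g)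
    (hz : ∀ j, g j x = 0 → g j z = 0) : IsMinOn f (affinePolyhedron g) z := by
  rw [isMinOn_iff] at hx ⊢
  have hnear : ∀ᶠ t in 𝓝 (0 : ℝ), AffineMap.lineMap x z t ∈ affinePolyhedron g := by
    refine eventually_all.2 fun j => ?_
    simp only [AffineMap.apply_lineMap, AffineMap.lineMap_apply_ring']
    rcases (hxP j).lt_or_eq with hlt | heq
    · have hcont : Continuous fun t : ℝ => t * (g j z - g j x) + g j x := by fun_prop
      exact (hcont.tendsto' 0 _ (by simp)).eventually (gt_mem_nhds hlt) |>.mono fun t ht => ht.le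
    · exact Eventually.of_forall fun t => by simp [heq, hz j heq]
  -- for small `t < 0` the point `lineMap x z t` is feasible, and minimality of `x` there
  -- forces `f z ≤ f x`
  obtain ⟨t, ht, htneg⟩ :=
    ((hnear.filter_mono (nhdsWithin_le_nhds (s := Set.Iio 0))).and self_mem_nhdsWithin).exists
  have h := hx _ ht
  rw [AffineMap.apply_lineMap, AffineMap.lineMap_apply_ring'] at h
  have hzx : f z ≤ f x := by nlinarith [show t < 0 from htneg]
  exact fun w hw => hzx.trans (hx w hw)

theorem exists_setOf_isMinOn_eq [Finite ι] (f : E →ᵃ[ℝ] ℝ)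
    (hmin : ∃ x ∈ affinePolyhedron g, IsMinOn f (affinePolyhedron g) x) :
    ∃ S : Set ι, {x ∈ affinePolyhedron g | IsMinOn f (affinePolyhedron g) x}
      = {x ∈ affinePolyhedron g | ∀ j ∈ S, g j x = 0} := by
  obtain ⟨x₀, hx₀P, hx₀⟩ := hmin
  have hF : {x ∈ affinePolyhedron g | IsMinOn f (affinePolyhedron g) x}
      = affinePolyhedron g ∩ f ⁻¹' Set.Iic (f x₀) := by
    ext x
    rw [isMinOn_iff] at hx₀
    simp only [Set.mem_sep_iff, Set.mem_inter_iff, Set.mem_preimage, Set.mem_Iic, isMinOn_iff]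
    exact and_congr_right fun _ => ⟨fun h => h x₀ hx₀P, fun h w hw => h.trans (hx₀ w hw)⟩
  have hconv := hF ▸ (convex_affinePolyhedron g).inter ((convex_Iic _).affine_preimage f)
  obtain ⟨x₁, ⟨hx₁P, hx₁⟩, hrel⟩ :=
    exists_forall_lt_zero_of_convex g hconv ⟨x₀, hx₀P, hx₀⟩ fun x hx => hx.1
  refine ⟨{j | g j x₁ = 0}, Set.ext fun x => and_congr_right fun hxP =>
    ⟨fun hx j hj => ?_, isMinOn_of_forall_eq_zero g hx₁ hx₁P⟩⟩
  by_contra hne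
  exact (hrel j ⟨x, ⟨hxP, hx⟩, (hxP j).lt_of_ne hne⟩).ne hj

end Face

section Minimizers

variable {U Y : Type*} [Fintype Y] {p : Y → ℝ} {L : U → Y → ℝ}

lemma Minimizes.bayesRisk_eq {u : U} (h : Minimizes p L u) : bayesRisk p L = elloss p (L u) :=
  IsLeast.csInf_eq ⟨⟨u, rfl⟩, by rintro _ ⟨v, rfl⟩; exact h v⟩

lemma Minimizes.bayesRisk_le {u₀ : U} (h : Minimizes p L u₀) (u : U) :
    bayesRisk p L ≤ elloss p (L u) :=
  h.bayesRisk_eq ▸ h u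

lemma minimizes_iff_elloss_le_bayesRisk {u₀ : U} (h : Minimizes p L u₀) {u : U} :
    Minimizes p L u ↔ elloss p (L u) ≤ bayesRisk p L :=
  ⟨fun hu => hu.bayesRisk_eq.ge, fun hu v => hu.trans (h.bayesRisk_le v)⟩

lemma elloss_mono (hp : ∀ y, 0 ≤ p y) {v w : Y → ℝ} (h : ∀ y, v y ≤ w y) :
    elloss p v ≤ elloss p w :=
  sum_le_sum fun y _ => mul_le_mul_of_nonneg_left (h y) (hp y)

end Minimizers

theorem exists_setOf_minimizes_eq_active {E Y : Type*} [AddCommGroup E] [Module ℝ E] [Fintype Y]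
    {ι : Y → Type*} [∀ y, Fintype (ι y)] [∀ y, Nonempty (ι y)] {L : E → Y → ℝ}
    (P : ∀ y, ι y → E →ᵃ[ℝ] ℝ) (hL : ∀ u y, L u y = univ.sup' univ_nonempty fun i => P y i u)
    {p : Y → ℝ} (hp : ∀ y, 0 ≤ p y) {u₀ : E} (hu₀ : Minimizes p L u₀) :
    ∃ S : Set (Σ y, ι y), {u | Minimizes p L u} = {u | ∀ j ∈ S, P j.1 j.2 u = L u j.1} := by
  -- `Γ p` is the projection of the face of the epigraph polyhedron `{(u, t) | P y i u ≤ t y}`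
  -- on which `⟨p, t⟩` is minimal
  let g : (Σ y, ι y) → E × (Y → ℝ) →ᵃ[ℝ] ℝ := fun j =>
    (P j.1 j.2).comp (AffineMap.fst : E × (Y → ℝ) →ᵃ[ℝ] E)
      - (LinearMap.proj j.1 ∘ₗ LinearMap.snd ℝ E (Y → ℝ)).toAffineMap
  let f : E × (Y → ℝ) →ᵃ[ℝ] ℝ :=
    ((∑ y, p y • LinearMap.proj y) ∘ₗ LinearMap.snd ℝ E (Y → ℝ)).toAffineMap
  have hg : ∀ j x, g j x = P j.1 j.2 x.1 - x.2 j.1 := fun j x => by simp [g]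
  have hf : ∀ x, f x = elloss p x.2 := fun x => by simp [f, elloss]
  have hgraph : ∀ u, (u, L u) ∈ affinePolyhedron g := fun u j => by
    rw [hg, sub_nonpos]
    show P j.1 j.2 u ≤ L u j.1
    rw [hL]
    exact le_sup' (fun i => P j.1 i u) (mem_univ j.2)
  have habove : ∀ x ∈ affinePolyhedron g, ∀ y, L x.1 y ≤ x.2 y := fun x hx y => by
    rw [hL]
    exact sup'_le _ _ fun i _ => by linarith [hg ⟨y, i⟩ x ▸ hx ⟨y, i⟩]
  have hiff : ∀ u, Minimizes p L u ↔ IsMinOn f (affinePolyhedron g) (u, L u) := fun u => by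
    rw [isMinOn_iff]
    refine ⟨fun hu x hx => ?_, fun hu v => ?_⟩
    · rw [hf, hf]
      exact (hu x.1).trans (elloss_mono hp (habove x hx))
    · simpa only [hf] using hu (v, L v) (hgraph v)
  obtain ⟨S, hS⟩ := exists_setOf_isMinOn_eq g f ⟨(u₀, L u₀), hgraph u₀, (hiff u₀).1 hu₀⟩
  refine ⟨S, Set.ext fun u => ?_⟩
  have hu := Set.ext_iff.1 hS (u, L u)
  simp only [Set.mem_sep_iff, and_iff_right (hgraph u)] at hu
  rw [Set.mem_ofPred_eq, hiff, hu]
  simp only [hg, sub_eq_zero, Set.mem_ofPred_eq]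

section PolyhedralLoss

variable {Y : Type*} [Fintype Y] {ι : Y → Type*} [∀ y, Fintype (ι y)] [∀ y, Nonempty (ι y)]
  {d : ℕ} {L : (Fin d → ℝ) → Y → ℝ} {a : ∀ y, ι y → Fin d → ℝ} {b : ∀ y, ι y → ℝ}

/-- For `p ≥ 0`, `⟨p, L u⟩` is the maximum over the choices `τ` of one piece per outcome of
the affine functions `tupleRow a p τ ⬝ᵥ u + tupleConst b p τ`. -/
def tupleRow (a : ∀ y, ι y → Fin d → ℝ) (p : Y → ℝ) (τ : ∀ y, ι y) : Fin d → ℝ :=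
  ∑ y, p y • a y (τ y)

def tupleConst (b : ∀ y, ι y → ℝ) (p : Y → ℝ) (τ : ∀ y, ι y) : ℝ :=
  ∑ y, p y * b y (τ y)

lemma sum_mul_sup'_le_iff {f : ∀ y, ι y → ℝ} {p : Y → ℝ} (hp : ∀ y, 0 ≤ p y) {s : ℝ} :
    ∑ y, p y * univ.sup' univ_nonempty (f y) ≤ s ↔ ∀ τ : ∀ y, ι y, ∑ y, p y * f y (τ y) ≤ s := by
  refine ⟨fun h τ => (sum_le_sum fun y _ => ?_).trans h, fun h => ?_⟩
  · exact mul_le_mul_of_nonneg_left (le_sup' (f y) (mem_univ _)) (hp y)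
  · choose τ hτ using fun y => exists_mem_eq_sup' univ_nonempty (f y)
    simpa only [(hτ _).2] using h fun y => τ y

variable (hL : ∀ u y, L u y = univ.sup' univ_nonempty fun i => a y i ⬝ᵥ u + b y i)
include hL

lemma elloss_le_iff {p : Y → ℝ} (hp : ∀ y, 0 ≤ p y) (u : Fin d → ℝ) (s : ℝ) :
    elloss p (L u) ≤ s ↔ ∀ τ, tupleRow a p τ ⬝ᵥ u + tupleConst b p τ ≤ s := by
  simp only [elloss, hL, sum_mul_sup'_le_iff hp, tupleRow, tupleConst, sum_dotProduct,
    smul_dotProduct, smul_eq_mul, mul_add, sum_add_distrib]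

lemma setOf_minimizes_eq_polyhedron {p : Y → ℝ} (hp : ∀ y, 0 ≤ p y) {u₀ : Fin d → ℝ}
    (hu₀ : Minimizes p L u₀) :
    {u | Minimizes p L u}
      = polyhedron (tupleRow a p) fun τ => bayesRisk p L - tupleConst b p τ := by
  ext u
  simp only [Set.mem_ofPred_eq, minimizes_iff_elloss_le_bayesRisk hu₀, elloss_le_iff hL hp,
    polyhedron, le_sub_iff_add_le]

lemma exists_pos_forall_elloss_le_dist_le {p : Y → ℝ} (hp : ∀ y, 0 ≤ p y) {u₀ : Fin d → ℝ}
    (hu₀ : Minimizes p L u₀) {ε : ℝ} (hε : 0 < ε) :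
    ∃ c : ℝ, 0 < c ∧ ∀ u, elloss p (L u) ≤ bayesRisk p L + c →
      ∃ v, Minimizes p L v ∧ dist u v ≤ ε := by
  classical
  have hset := setOf_minimizes_eq_polyhedron hL hp hu₀
  obtain ⟨c, hc, hnear⟩ := exists_pos_forall_dist_le zero_le_one ⟨u₀, hset.subset hu₀⟩ hε
  refine ⟨c, hc, fun u hu => ?_⟩
  obtain ⟨v, hv, huv⟩ := hnear u fun τ => by
    have := (elloss_le_iff hL hp u _).1 hu τ
    simp only [Pi.add_apply, Pi.smul_apply, Pi.one_apply, smul_eq_mul, mul_one]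
    linarith
  exact ⟨v, hset.symm.subset hv, huv⟩

lemma exists_pos_forall_dist_le_exists_minimizes {Q : Finset (Y → ℝ)}
    (hQ : ∀ q ∈ Q, (∀ y, 0 ≤ q y) ∧ ∃ u, Minimizes q L u) :
    ∃ ε : ℝ, 0 < ε ∧ ∀ u, ∀ s ⊆ Q, (∀ q ∈ s, ∃ v, Minimizes q L v ∧ dist u v ≤ ε) →
      ∃ x, ∀ q ∈ s, Minimizes q L x := by
  classical
  have h : ∀ s ∈ Q.powerset, ∀ᶠ η in 𝓝[>] (0 : ℝ), ∀ u,
      (∀ q ∈ s, ∃ v, Minimizes q L v ∧ dist u v ≤ η) → ∃ x, ∀ q ∈ s, Minimizes q L x := by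
    intro s hs
    have hset : ∀ q : s, {u | Minimizes q.1 L u}
        = polyhedron (tupleRow a q.1) fun τ => bayesRisk q.1 L - tupleConst b q.1 τ := fun q =>
      let ⟨hq, _, hu₀⟩ := hQ q (mem_powerset.1 hs q.2)
      setOf_minimizes_eq_polyhedron hL hq hu₀
    filter_upwards [eventually_nonempty_iInter_of_forall_dist_le (fun q : s => tupleRow a q.1)
      fun q τ => bayesRisk q.1 L - tupleConst b q.1 τ] with η hη u hu
    obtain ⟨x, hx⟩ := hη u fun q => by
      obtain ⟨v, hv, huv⟩ := hu q q.2
      exact ⟨v, (hset q).subset hv, huv⟩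
    exact ⟨x, fun q hq => (hset ⟨q, hq⟩).symm.subset (Set.mem_iInter.1 hx ⟨q, hq⟩)⟩
  obtain ⟨ε, hε, hεpos⟩ := (((eventually_all_finset _).2 h).and self_mem_nhdsWithin).exists
  exact ⟨ε, hεpos, fun u s hs => hε s (mem_powerset.2 hs) u⟩

lemma exists_finset_setOf_minimizes_eq (hmin : ∀ p ∈ probSimplex Y, ∃ u, Minimizes p L u) :
    ∃ Q : Finset (Y → ℝ), ↑Q ⊆ probSimplex Y ∧
      ∀ p ∈ probSimplex Y, ∃ q ∈ Q, {u | Minimizes q L u} = {u | Minimizes p L u} := by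
  classical
  set G : (Y → ℝ) → Set (Fin d → ℝ) := fun p => {u | Minimizes p L u}
  have hfin : (G '' probSimplex Y).Finite := by
    refine (Set.finite_range fun S : Set (Σ y, ι y) =>
      {u | ∀ j ∈ S, a j.1 j.2 ⬝ᵥ u + b j.1 j.2 = L u j.1}).subset ?_
    rintro _ ⟨p, hp, rfl⟩
    obtain ⟨u₀, hu₀⟩ := hmin p hp
    obtain ⟨S, hS⟩ := exists_setOf_minimizes_eq_active
      (fun y i => (dotProductBilin ℝ ℝ (a y i)).toAffineMap + AffineMap.const ℝ _ (b y i))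
      (by simpa using hL) hp.1 hu₀
    exact ⟨S, by simpa using hS.symm⟩
  obtain ⟨Q, hQ, -, hQG⟩ := exists_subset_injOn_image_eq_of_surjOn _ hfin.toFinset
    (by simpa using Set.surjOn_image G (probSimplex Y))
  refine ⟨Q, hQ, fun p hp => ?_⟩
  obtain ⟨q, hq, hqp⟩ := mem_image.1 (hQG ▸ hfin.mem_toFinset.2 ⟨p, hp, rfl⟩ : G p ∈ Q.image G)
  exact ⟨q, hq, hqp⟩

end PolyhedralLoss

section Embedding

variable {U Y R : Type*} [Fintype Y] {L : U → Y → ℝ}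

lemma minimizes_of_minimizes_sum_smul {κ : Type*} {s : Finset κ} {q : κ → Y → ℝ} {w : κ → ℝ}
    (hw : ∀ k ∈ s, 0 < w k) {x z : U} (hx : ∀ k ∈ s, Minimizes (q k) L x)
    (hz : Minimizes (∑ k ∈ s, w k • q k) L z) : ∀ k ∈ s, Minimizes (q k) L z := by
  have hlin : ∀ v, elloss (∑ k ∈ s, w k • q k) v = ∑ k ∈ s, w k * elloss (q k) v := fun v => by
    simp only [elloss, ← dotProduct.eq_1, sum_dotProduct, smul_dotProduct, smul_eq_mul]
  have heq : ∀ k ∈ s, w k * elloss (q k) (L x) = w k * elloss (q k) (L z) :=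
    (sum_eq_sum_iff_of_le fun k hk => mul_le_mul_of_nonneg_left (hx k hk z) (hw k hk).le).1
      (le_antisymm (sum_le_sum fun k hk => mul_le_mul_of_nonneg_left (hx k hk z) (hw k hk).le)
        (by simpa only [hlin] using hz x))
  intro k hk v
  rw [← mul_left_cancel₀ (hw k hk).ne' (heq k hk)]
  exact hx k hk v

lemma exists_minimizes_forall_of_embedding [Finite R] [Nonempty R] {ℓ : R → Y → ℝ} {φ : R → U}
    (hφ : ∀ p ∈ probSimplex Y, ∀ r, Minimizes p ℓ r ↔ Minimizes p L (φ r))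
    {s : Finset (Y → ℝ)} (hs : ∀ q ∈ s, q ∈ probSimplex Y) {x : U}
    (hx : ∀ q ∈ s, Minimizes q L x) : ∃ r, ∀ q ∈ s, Minimizes q L (φ r) := by
  rcases s.eq_empty_or_nonempty with rfl | hne
  · exact ⟨Classical.arbitrary R, by simp⟩
  have hcard : (0 : ℝ) < s.card := Nat.cast_pos.2 hne.card_pos
  set p := ∑ q ∈ s, (s.card : ℝ)⁻¹ • q
  have hp : p ∈ probSimplex Y := (convex_stdSimplex ℝ Y).sum_mem (fun _ _ => by positivity)
    (by rw [sum_const, nsmul_eq_mul, mul_inv_cancel₀ hcard.ne']) hs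
  obtain ⟨r, hr⟩ := Finite.exists_min fun r => elloss p (ℓ r)
  exact ⟨r, minimizes_of_minimizes_sum_smul (fun _ _ => by positivity) hx ((hφ p hp r).1 hr)⟩

lemma exists_pos_mul_regret_le [Finite R] [Nonempty R] {ℓ : R → Y → ℝ} {ψ : U → R} {p : Y → ℝ}
    {u₀ : U} (hu₀ : Minimizes p L u₀) {c : ℝ} (hc : 0 < c)
    (hψ : ∀ u, elloss p (L u) ≤ bayesRisk p L + c → Minimizes p ℓ (ψ u)) :
    ∃ δ > 0, ∀ u, δ * (elloss p (ℓ (ψ u)) - bayesRisk p ℓ) ≤ elloss p (L u) - bayesRisk p L := by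
  obtain ⟨r₀, hr₀⟩ := Finite.exists_min fun r => elloss p (ℓ r)
  obtain ⟨r₁, hr₁⟩ := Finite.exists_max fun r => elloss p (ℓ r)
  have hℓ : bayesRisk p ℓ = elloss p (ℓ r₀) := Minimizes.bayesRisk_eq hr₀
  set B := elloss p (ℓ r₁) - bayesRisk p ℓ
  have hB : 0 ≤ B := by linarith [hr₀ r₁]
  refine ⟨c / (B + 1), by positivity, fun u => ?_⟩
  have hreg : 0 ≤ elloss p (L u) - bayesRisk p L := sub_nonneg.2 (hu₀.bayesRisk_le u)
  by_cases hu : elloss p (L u) ≤ bayesRisk p L + c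
  · rwa [(hψ u hu).bayesRisk_eq, sub_self, mul_zero]
  calc c / (B + 1) * (elloss p (ℓ (ψ u)) - bayesRisk p ℓ) ≤ c / (B + 1) * B := by
        gcongr
        linarith [hr₁ (ψ u)]
    _ ≤ c := by
        rw [div_mul_eq_mul_div, div_le_iff₀ (by positivity)]
        nlinarith
    _ ≤ elloss p (L u) - bayesRisk p L := by linarith

end Embedding

theorem polyhedral_embedding_surrogate_regret_bound_general
    {Y R : Type*} [Fintype Y] [Fintype R] [Nonempty R] {d : ℕ}
    (L : (Fin d → ℝ) → Y → ℝ)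
    (hpoly : ∀ y, IsPolyhedralFn (fun u => L u y))
    (ℓ : R → Y → ℝ)
    (hembed : Embeds L ℓ) :
    ∃ ψ : (Fin d → ℝ) → R, ∀ p ∈ probSimplex Y, ∃ δ > 0, ∀ u : Fin d → ℝ,
      δ * (elloss p (ℓ (ψ u)) - bayesRisk p ℓ) ≤ elloss p (L u) - bayesRisk p L := by
  obtain ⟨φ, -, -, hφ⟩ := hembed
  choose m a b hpiece using hpoly
  have hL : ∀ u y, L u y = univ.sup' univ_nonempty fun i => a y i ⬝ᵥ u + b y i :=
    fun u y => hpiece y u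
  have hmin : ∀ p ∈ probSimplex Y, ∃ u, Minimizes p L u := fun p hp =>
    let ⟨r, hr⟩ := Finite.exists_min fun r => elloss p (ℓ r)
    ⟨φ r, (hφ p hp r).1 hr⟩
  obtain ⟨Q, hQΔ, hQ⟩ := exists_finset_setOf_minimizes_eq hL hmin
  obtain ⟨ε, hε, hcommon⟩ := exists_pos_forall_dist_le_exists_minimizes hL fun q hq =>
    ⟨(hQΔ hq).1, hmin q (hQΔ hq)⟩
  have hlink : ∀ u, ∃ r, ∀ q ∈ Q, (∃ v, Minimizes q L v ∧ dist u v ≤ ε) → Minimizes q L (φ r) := by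
    classical
    intro u
    obtain ⟨x, hx⟩ := hcommon u _ (filter_subset _ Q) fun q hq => (mem_filter.1 hq).2
    obtain ⟨r, hr⟩ := exists_minimizes_forall_of_embedding hφ
      (fun q hq => hQΔ (mem_filter.1 hq).1) hx
    exact ⟨r, fun q hq hnear => hr q (mem_filter.2 ⟨hq, hnear⟩)⟩
  choose ψ hψ using hlink
  refine ⟨ψ, fun p hp => ?_⟩
  obtain ⟨u₀, hu₀⟩ := hmin p hp
  obtain ⟨q, hq, hqp⟩ := hQ p hp
  obtain ⟨c, hc, hnear⟩ := exists_pos_forall_elloss_le_dist_le hL hp.1 hu₀ hε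
  refine exists_pos_mul_regret_le hu₀ hc fun u hu => (hφ p hp _).2 (hqp.subset (hψ u q hq ?_))
  obtain ⟨v, hv, huv⟩ := hnear u hu
  exact ⟨v, hqp.symm.subset hv, huv⟩

/-- A polyhedral loss that embeds a discrete loss `ℓ` admits a link `ψ` such
that for every `p` in the simplex there is `δ > 0` with
`⟨p, L u⟩ − inf ⟨p, L ·⟩ ≥ δ (⟨p, ℓ (ψ u)⟩ − min ⟨p, ℓ ·⟩)` for all `u`. -/
theorem polyhedral_embedding_surrogate_regret_bound
    {Y R : Type*} [Fintype Y] [Fintype R] [Nonempty R] {d : ℕ}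
    (L : (Fin d → ℝ) → Y → ℝ) (hL0 : ∀ u y, 0 ≤ L u y)
    (hpoly : ∀ y, IsPolyhedralFn (fun u => L u y))
    (ℓ : R → Y → ℝ) (hℓ0 : ∀ r y, 0 ≤ ℓ r y)
    (hembed : Embeds L ℓ) :
    ∃ ψ : (Fin d → ℝ) → R, ∀ p ∈ probSimplex Y, ∃ δ > 0, ∀ u : Fin d → ℝ,
      δ * (elloss p (ℓ (ψ u)) - bayesRisk p ℓ) ≤ elloss p (L u) - bayesRisk p L :=
  polyhedral_embedding_surrogate_regret_bound_general L hpoly ℓ hembed
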